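/- arXiv:1603.07647 — 3 statements merged into one kernel-verified Lean document; each statement's English description precedes it below -/
import Mathlib

section
/- Let g : [0,∞) → ℝ be non-increasing with g(0) = 1, 0 < g(t) ≤ 1 for all t ≥ 0, and lim_{t→∞} g(t) = 0, and define f(r,s,ξ,η) := ‖ξ‖ + g(‖ξ‖)‖η‖ + ‖rη + s⊗ξ‖. Then for every r ∈ ℝ, s ∈ ℝ³, ξ ∈ ℝ², η ∈ ℝ^{3×2}, the recession function f^∞(r,s,ξ,η) := limsup_{t→∞} f(r,s,tξ,tη)/t equals ‖ξ‖ + χ_{{0}}(ξ)‖η‖ + ‖rη + s⊗ξ‖, where χ_{{0}}(ξ) = 1 if ξ = 0 and χ_{{0}}(ξ) = 0 otherwise; moreover, when ξ ≠ 0 the limsup is in fact a limit. -/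
open scoped Classical

open Filter

noncomputable section

abbrev E2 : Type := EuclideanSpace ℝ (Fin 2)
abbrev E3 : Type := EuclideanSpace ℝ (Fin 3)
abbrev E32 : Type := EuclideanSpace ℝ (Fin 3 × Fin 2)

/-- The tensor product `s ⊗ ξ`, viewed as a 3×2 matrix endowed with the
Frobenius (Euclidean) norm. -/
def tens (s : E3) (ξ : E2) : E32 := WithLp.toLp 2 (fun p : Fin 3 × Fin 2 => s p.1 * ξ p.2)

/-- The regularization density `f(r,s,ξ,η) = ‖ξ‖ + g(‖ξ‖)‖η‖ + ‖rη + s⊗ξ‖`. -/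
def fdens (g : ℝ → ℝ) (r : ℝ) (s : E3) (ξ : E2) (η : E32) : ℝ :=
  ‖ξ‖ + g ‖ξ‖ * ‖η‖ + ‖r • η + tens s ξ‖

/-! Along the ray `t ↦ (t ξ, t η)` every term of `f` is positively 1-homogeneous except the
weight `g(t‖ξ‖)`, so `f(r, s, tξ, tη) / t` converges to `‖ξ‖ + c‖η‖ + ‖rη + s⊗ξ‖` where `c` is
the limit of `g(t‖ξ‖)`: this is `g 0 = 1` when `ξ = 0` and `lim_{∞} g = 0` otherwise. -/

lemma tens_smul_right (s : E3) (ξ : E2) (t : ℝ) : tens s (t • ξ) = t • tens s ξ := by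
  ext p
  simp only [tens, PiLp.smul_apply, smul_eq_mul]
  ring

lemma fdens_smul_div (g : ℝ → ℝ) (r : ℝ) (s : E3) (ξ : E2) (η : E32) {t : ℝ} (ht : 0 < t) :
    fdens g r s (t • ξ) (t • η) / t = ‖ξ‖ + g (t * ‖ξ‖) * ‖η‖ + ‖r • η + tens s ξ‖ := by
  have hlin : r • (t • η) + tens s (t • ξ) = t • (r • η + tens s ξ) := by
    rw [tens_smul_right, smul_add, smul_comm]
  rw [fdens, hlin, norm_smul, norm_smul, norm_smul, Real.norm_of_nonneg ht.le]
  field_simp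

lemma tendsto_fdens_smul_div (g : ℝ → ℝ) (r : ℝ) (s : E3) (ξ : E2) (η : E32) {c : ℝ}
    (hc : Tendsto (fun t => g (t * ‖ξ‖)) atTop (nhds c)) :
    Tendsto (fun t => fdens g r s (t • ξ) (t • η) / t) atTop
      (nhds (‖ξ‖ + c * ‖η‖ + ‖r • η + tens s ξ‖)) := by
  refine ((tendsto_const_nhds.add (hc.mul_const _)).add tendsto_const_nhds).congr' ?_
  filter_upwards [eventually_gt_atTop 0] with t ht
  exact (fdens_smul_div g r s ξ η ht).symm

theorem stmt1_general (g : ℝ → ℝ)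
    (hg0 : g 0 = 1)
    (hg_lim : Tendsto g atTop (nhds 0))
    (r : ℝ) (s : E3) (ξ : E2) (η : E32) :
    limsup (fun t : ℝ => fdens g r s (t • ξ) (t • η) / t) atTop
      = ‖ξ‖ + (if ξ = 0 then (1 : ℝ) else 0) * ‖η‖ + ‖r • η + tens s ξ‖ ∧
    (ξ ≠ 0 → Tendsto (fun t : ℝ => fdens g r s (t • ξ) (t • η) / t) atTop
        (nhds (‖ξ‖ + ‖r • η + tens s ξ‖))) := by
  have hg_ray : Tendsto (fun t => g (t * ‖ξ‖)) atTop (nhds (if ξ = 0 then 1 else 0)) := by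
    split_ifs with hξ
    · simp [hξ, hg0]
    · exact hg_lim.comp (tendsto_id.atTop_mul_const (norm_pos_iff.2 hξ))
  have hlim := tendsto_fdens_smul_div g r s ξ η hg_ray
  exact ⟨hlim.limsup_eq, fun hξ => by simpa [hξ] using hlim⟩

theorem stmt1 (g : ℝ → ℝ)
    (hg_pos : ∀ t : ℝ, 0 ≤ t → 0 < g t ∧ g t ≤ 1)
    (hg_mono : ∀ t₁ t₂ : ℝ, 0 ≤ t₁ → t₁ ≤ t₂ → g t₂ ≤ g t₁)
    (hg0 : g 0 = 1)
    (hg_lim : Tendsto g atTop (nhds 0))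
    (r : ℝ) (s : E3) (ξ : E2) (η : E32) :
    limsup (fun t : ℝ => fdens g r s (t • ξ) (t • η) / t) atTop
      = ‖ξ‖ + (if ξ = 0 then (1 : ℝ) else 0) * ‖η‖ + ‖r • η + tens s ξ‖ ∧
    (ξ ≠ 0 → Tendsto (fun t : ℝ => fdens g r s (t • ξ) (t • η) / t) atTop
        (nhds (‖ξ‖ + ‖r • η + tens s ξ‖))) :=
  stmt1_general g hg0 hg_lim r s ξ η
end
end

section
/- Let Ω ⊂ ℝ² be a nonempty open bounded set, let 0 < α ≤ β, and let u₀ : Ω → ℝ³ be a measurable function with α ≤ ‖u₀(x)‖ ≤ β for a.e. x ∈ Ω. Then there exist a constant c₀ ∈ [α,β] and a measurable function u_c : Ω → S² taking at most two values such that, setting u_b(x) := c₀ for all x ∈ Ω, one has ∫_Ω (u_b(x) − ‖u₀(x)‖) dx = 0 and ∫_Ω (u_b(x) u_c(x) − u₀(x)) dx = 0. -/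
open MeasureTheory

noncomputable section

/-!
Take for `c₀` the mean of `‖u₀‖` over `Ω`, which lies in `[α, β]`. Then
`w := c₀⁻¹ ∫_Ω u₀` has norm at most `|Ω|`, so it suffices to write `w` as the integral of a
two-valued unit field `±e` with `e = w / ‖w‖`: this amounts to finding `A ⊆ Ω` with
`|A| = (|Ω| + ‖w‖) / 2`, which is `Ω ∩ ball 0 r` for a suitable `r` by the intermediate value
theorem, since `r ↦ |Ω ∩ ball 0 r|` is continuous.
-/

open Metric Set Bornology

theorem ContinuousOn.of_dist_le {X Y Z : Type*} [PseudoMetricSpace X] [PseudoMetricSpace Y]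
    [PseudoMetricSpace Z] {f : X → Y} {g : X → Z} {s : Set X} (hg : ContinuousOn g s)
    (hfg : ∀ a ∈ s, ∀ b ∈ s, dist (f a) (f b) ≤ dist (g a) (g b)) : ContinuousOn f s := by
  rw [Metric.continuousOn_iff] at hg ⊢
  intro b hb ε hε
  obtain ⟨δ, hδ, hgδ⟩ := hg b hb ε hε
  exact ⟨δ, hδ, fun a ha hab => (hfg a ha b hb).trans_lt (hgδ a ha hab)⟩

theorem measureReal_inter_sub_le {α : Type*} [MeasurableSpace α] {μ : Measure α}
    (s : Set α) {t u : Set α} (htu : t ⊆ u) (ht : MeasurableSet t) (hu : μ u ≠ ⊤) :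
    μ.real (s ∩ u) - μ.real (s ∩ t) ≤ μ.real u - μ.real t := by
  have hsplit : μ.real t + μ.real (u \ t) = μ.real u := by
    simpa [inter_eq_right.2 htu] using measureReal_inter_add_sdiff (μ := μ) (s := u) ht hu
  have hcover : s ∩ u ⊆ (s ∩ t) ∪ (u \ t) := fun x ⟨hs, hu⟩ => by
    by_cases hx : x ∈ t
    exacts [Or.inl ⟨hs, hx⟩, Or.inr ⟨hu, hx⟩]
  have := (measureReal_mono hcover
    (measure_ne_top_of_subset (union_subset (inter_subset_right.trans htu) sdiff_subset) hu)).trans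
      (measureReal_union_le _ _)
  linarith

section AddHaar

variable {E : Type*} [NormedAddCommGroup E] [NormedSpace ℝ E] [FiniteDimensional ℝ E]
  [MeasurableSpace E] [BorelSpace E] [Nontrivial E] (μ : Measure E) [μ.IsAddHaarMeasure]

theorem continuousOn_measureReal_inter_ball (s : Set E) (x : E) :
    ContinuousOn (fun r => μ.real (s ∩ ball x r)) (Ici 0) := by
  have hball : ContinuousOn (fun r => μ.real (ball x r)) (Ici 0) := by
    have : ContinuousOn (fun r : ℝ => r ^ Module.finrank ℝ E * μ.real (ball 0 1)) (Ici 0) := by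
      fun_prop
    refine this.congr fun r hr => ?_
    simp [measureReal_def, Measure.addHaar_ball μ x (mem_Ici.1 hr), ENNReal.toReal_ofReal,
      pow_nonneg (mem_Ici.1 hr)]
  -- the mass of `s` in an annulus is at most the mass of the annulus
  have hmono : ∀ r s', r ≤ s' → dist (μ.real (s ∩ ball x r)) (μ.real (s ∩ ball x s')) ≤
      dist (μ.real (ball x r)) (μ.real (ball x s')) := by
    intro r s' h
    have hsub := ball_subset_ball (x := x) h
    rw [Real.dist_eq, Real.dist_eq, abs_sub_comm, abs_of_nonneg, abs_sub_comm, abs_of_nonneg]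
    · exact measureReal_inter_sub_le s hsub measurableSet_ball measure_ball_lt_top.ne
    · exact sub_nonneg.2 (measureReal_mono hsub measure_ball_lt_top.ne)
    · exact sub_nonneg.2 (measureReal_mono (inter_subset_inter_right s hsub)
        (measure_ne_top_of_subset inter_subset_right measure_ball_lt_top.ne))
  refine hball.of_dist_le fun r _ s' _ => ?_
  rcases le_total r s' with h | h
  · exact hmono r s' h
  · rw [dist_comm, dist_comm (μ.real (ball x r))]
    exact hmono s' r h

theorem exists_subset_measureReal_eq {s : Set E} (hs : MeasurableSet s) (hbdd : IsBounded s)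
    {a : ℝ} (ha : a ∈ Icc 0 (μ.real s)) : ∃ t ⊆ s, MeasurableSet t ∧ μ.real t = a := by
  obtain ⟨R, hR, hsR⟩ := hbdd.subset_ball_lt 0 0
  have hIcc : a ∈ Icc (μ.real (s ∩ ball 0 0)) (μ.real (s ∩ ball 0 R)) := by
    simpa [inter_eq_left.2 hsR] using ha
  obtain ⟨r, -, hr⟩ := intermediate_value_Icc hR.le
    ((continuousOn_measureReal_inter_ball μ s 0).mono Icc_subset_Ici_self) hIcc
  exact ⟨s ∩ ball 0 r, inter_subset_left, hs.inter measurableSet_ball, hr⟩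

end AddHaar

theorem exists_norm_eq_one_smul_eq {F : Type*} [NormedAddCommGroup F] [NormedSpace ℝ F]
    [Nontrivial F] (w : F) : ∃ e : F, ‖e‖ = 1 ∧ ‖w‖ • e = w := by
  rcases eq_or_ne w 0 with rfl | hw
  · obtain ⟨e, he⟩ := exists_norm_eq F zero_le_one
    exact ⟨e, he, by simp⟩
  · exact ⟨‖w‖⁻¹ • w, norm_smul_inv_norm hw, by simp [smul_smul, hw]⟩

theorem setIntegral_piecewise_const_neg {α F : Type*} [MeasurableSpace α] {μ : Measure α}
    [NormedAddCommGroup F] [NormedSpace ℝ F] [CompleteSpace F] {s t : Set α}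
    [DecidablePred (· ∈ t)]
    (ht : MeasurableSet t) (hts : t ⊆ s) (hs : μ s ≠ ⊤) (e : F) :
    ∫ x in s, t.piecewise (fun _ => e) (fun _ => -e) x ∂μ = (2 * μ.real t - μ.real s) • e := by
  have : IsFiniteMeasure (μ.restrict s) := isFiniteMeasure_restrict.2 hs
  have hrestrict : (μ.restrict s).real t = μ.real t := by
    rw [measureReal_restrict_apply ht, inter_eq_left.2 hts]
  rw [integral_piecewise ht (integrableOn_const (measure_ne_top _ _))
    (integrableOn_const (measure_ne_top _ _)), setIntegral_const,
    setIntegral_const, measureReal_compl ht, measureReal_restrict_apply_univ, hrestrict]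
  module

variable {E : Type*} [NormedAddCommGroup E] [NormedSpace ℝ E] [FiniteDimensional ℝ E]
  [MeasurableSpace E] [BorelSpace E] [Nontrivial E] (μ : Measure E) [μ.IsAddHaarMeasure] in
theorem exists_twoValued_unit_setIntegral_eq {F : Type*} [NormedAddCommGroup F]
    [NormedSpace ℝ F] [CompleteSpace F] [Nontrivial F] [MeasurableSpace F] {Ω : Set E}
    (hΩ : MeasurableSet Ω) (hbdd : IsBounded Ω) {w : F} (hw : ‖w‖ ≤ μ.real Ω) :
    ∃ u : E → F, Measurable u ∧ (∀ x, ‖u x‖ = 1) ∧ (∃ s₁ s₂ : F, ∀ x, u x = s₁ ∨ u x = s₂) ∧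
      ∫ x in Ω, u x ∂μ = w := by
  classical
  obtain ⟨e, he, hwe⟩ := exists_norm_eq_one_smul_eq w
  obtain ⟨A, hAΩ, hA, hAvol⟩ := exists_subset_measureReal_eq μ hΩ hbdd
    (a := (μ.real Ω + ‖w‖) / 2) ⟨by positivity, by linarith⟩
  refine ⟨A.piecewise (fun _ => e) (fun _ => -e), measurable_const.piecewise hA measurable_const,
    fun x => ?_, ⟨e, -e, fun x => ?_⟩, ?_⟩
  · by_cases hx : x ∈ A <;> simp [hx, he]
  · by_cases hx : x ∈ A <;> simp [hx]
  · rw [setIntegral_piecewise_const_neg hA hAΩ hbdd.measure_lt_top.ne, hAvol]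
    convert hwe using 2
    ring

theorem stmt5_general (α β : ℝ) (hα : 0 < α)
    (Ω : Set E2) (hne : Ω.Nonempty) (hopen : IsOpen Ω)
    (hbdd : Bornology.IsBounded Ω)
    (u₀ : E2 → E3) (hmeas : Measurable u₀)
    (hb : ∀ᵐ x ∂(volume.restrict Ω), α ≤ ‖u₀ x‖ ∧ ‖u₀ x‖ ≤ β) :
    ∃ c₀ ∈ Set.Icc α β, ∃ uc : E2 → E3,
      Measurable uc ∧ (∀ x, ‖uc x‖ = 1) ∧
      (∃ s₁ s₂ : E3, ∀ x, uc x = s₁ ∨ uc x = s₂) ∧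
      (∫ x in Ω, (c₀ - ‖u₀ x‖)) = 0 ∧
      (∫ x in Ω, (c₀ • uc x - u₀ x)) = 0 := by
  have hΩfin : volume Ω ≠ ⊤ := hbdd.measure_lt_top.ne
  have : IsFiniteMeasure (volume.restrict Ω) := isFiniteMeasure_restrict.2 hΩfin
  have hu₀ : IntegrableOn u₀ Ω :=
    Integrable.of_bound hmeas.aestronglyMeasurable β (hb.mono fun _ hx => hx.2)
  set c₀ := ⨍ x in Ω, ‖u₀ x‖
  have hc₀ : c₀ ∈ Icc α β := (convex_Icc α β).set_average_mem isClosed_Icc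
    (hopen.measure_ne_zero volume hne) hΩfin hb hu₀.norm
  have hc₀_int : volume.real Ω * c₀ = ∫ x in Ω, ‖u₀ x‖ := measure_smul_setAverage _ hΩfin
  have hc₀_pos : 0 < c₀ := hα.trans_le hc₀.1
  have hw : ‖c₀⁻¹ • ∫ x in Ω, u₀ x‖ ≤ volume.real Ω := by
    rw [norm_smul, norm_inv, Real.norm_of_nonneg hc₀_pos.le, inv_mul_le_iff₀ hc₀_pos, mul_comm,
      hc₀_int]
    exact norm_integral_le_integral_norm _
  obtain ⟨uc, huc_meas, huc_norm, huc_two, huc_int⟩ :=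
    exists_twoValued_unit_setIntegral_eq volume hopen.measurableSet hbdd hw
  refine ⟨c₀, hc₀, uc, huc_meas, huc_norm, huc_two, ?_, ?_⟩
  · rw [integral_sub (integrable_const c₀) hu₀.norm, setIntegral_const, smul_eq_mul, hc₀_int,
      sub_self]
  · have huc : IntegrableOn uc Ω :=
      Integrable.of_bound huc_meas.aestronglyMeasurable 1 (ae_of_all _ fun x => (huc_norm x).le)
    rw [integral_sub (f := fun x => c₀ • uc x) (huc.smul c₀) hu₀, integral_smul, huc_int,
      smul_inv_smul₀ hc₀_pos.ne', sub_self]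

theorem stmt5 (α β : ℝ) (hα : 0 < α) (hαβ : α ≤ β)
    (Ω : Set E2) (hne : Ω.Nonempty) (hopen : IsOpen Ω)
    (hbdd : Bornology.IsBounded Ω)
    (u₀ : E2 → E3) (hmeas : Measurable u₀)
    (hb : ∀ᵐ x ∂(volume.restrict Ω), α ≤ ‖u₀ x‖ ∧ ‖u₀ x‖ ≤ β) :
    ∃ c₀ ∈ Set.Icc α β, ∃ uc : E2 → E3,
      Measurable uc ∧ (∀ x, ‖uc x‖ = 1) ∧
      (∃ s₁ s₂ : E3, ∀ x, uc x = s₁ ∨ uc x = s₂) ∧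
      (∫ x in Ω, (c₀ - ‖u₀ x‖)) = 0 ∧
      (∫ x in Ω, (c₀ • uc x - u₀ x)) = 0 :=
  stmt5_general α β hα Ω hne hopen hbdd u₀ hmeas hb
end
end

section
/- Let 0 < α ≤ β and let g : [0,∞) → ℝ be non-increasing and Lipschitz with 0 < g(t) ≤ 1 for all t, g(0) = 1, and lim_{t→∞} g(t) = 0; define f(r,s,ξ,η) := ‖ξ‖ + g(‖ξ‖)‖η‖ + ‖rη + s⊗ξ‖. Then for every r ∈ [α,β], s ∈ S², ξ ∈ ℝ², and η ∈ ℝ^{3×2} with sᵀη = 0, one has Q_T f(r,s,ξ,η) = QF(r,s,ξ,η), where Q_T f(r,s,ξ,η) := inf{ ∫_Q f(r,s,ξ+∇φ(y), η+∇ψ(y)) dy : φ : ℝ² → ℝ and ψ : ℝ² → ℝ³ Lipschitz, vanishing outside the open unit cube Q := (−1/2,1/2)², with s·ψ(y) = 0 for all y } is the tangential quasiconvex envelope, and QF(r,s,ξ,η) := inf{ ∫_Q f(r,s,ξ+∇φ(y), P_s(η+∇ψ(y))) dy : φ : ℝ² → ℝ and ψ : ℝ² → ℝ³ Lipschitz,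 vanishing outside Q } is the (unconstrained) quasiconvex envelope of the projected integrand. -/
open MeasureTheory

noncomputable section

/-- The orthogonal projection `P_s η = (I - s sᵀ) η` of a 3×2 matrix, columnwise,
onto the tangent plane `T_s(S²)`. -/
def Pproj (s : E3) (η : E32) : E32 :=
  WithLp.toLp 2 (fun p : Fin 3 × Fin 2 => η p - s p.1 * ∑ i : Fin 3, s i * η (i, p.2))

/-- The open unit cube `Q = (-1/2, 1/2)²`. -/
def cubeQ : Set E2 := {y | ∀ j, y j ∈ Set.Ioo (-(1/2) : ℝ) (1/2)}

/-- The gradient `∇φ(y) ∈ ℝ²` of a scalar function `φ : ℝ² → ℝ`. -/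
def gradv (φ : E2 → ℝ) (y : E2) : E2 :=
  WithLp.toLp 2 (fun j => fderiv ℝ φ y (EuclideanSpace.single j 1))

/-- The gradient `∇ψ(y) ∈ ℝ^{3×2}` of a vector-valued function `ψ : ℝ² → ℝ³`. -/
def gradm (ψ : E2 → E3) (y : E2) : E32 :=
  WithLp.toLp 2 (fun p : Fin 3 × Fin 2 => fderiv ℝ ψ y (EuclideanSpace.single p.2 1) p.1)

/-- The tangential quasiconvex envelope `Q_T f(r,s,ξ,η)`: the infimum of
`∫_Q f(r,s,ξ+∇φ,η+∇ψ)` over Lipschitz `φ, ψ` vanishing outside `Q`, with `ψ`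
valued in the tangent plane `T_s(S²)`. -/
def QTf (g : ℝ → ℝ) (r : ℝ) (s : E3) (ξ : E2) (η : E32) : ℝ :=
  sInf {v : ℝ | ∃ φ : E2 → ℝ, ∃ ψ : E2 → E3,
    (∃ K : NNReal, LipschitzWith K φ) ∧ (∃ K : NNReal, LipschitzWith K ψ) ∧
    (∀ y ∉ cubeQ, φ y = 0) ∧ (∀ y ∉ cubeQ, ψ y = 0) ∧
    (∀ y, (inner ℝ s (ψ y) : ℝ) = 0) ∧
    v = ∫ y in cubeQ, fdens g r s (ξ + gradv φ y) (η + gradm ψ y)}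

/-- The (unconstrained) quasiconvex envelope of the projected integrand
`(ξ,η) ↦ f(r,s,ξ,P_s η)`. -/
def Qfproj (g : ℝ → ℝ) (r : ℝ) (s : E3) (ξ : E2) (η : E32) : ℝ :=
  sInf {v : ℝ | ∃ φ : E2 → ℝ, ∃ ψ : E2 → E3,
    (∃ K : NNReal, LipschitzWith K φ) ∧ (∃ K : NNReal, LipschitzWith K ψ) ∧
    (∀ y ∉ cubeQ, φ y = 0) ∧ (∀ y ∉ cubeQ, ψ y = 0) ∧
    v = ∫ y in cubeQ, fdens g r s (ξ + gradv φ y) (Pproj s (η + gradm ψ y))}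

/-!
A tangent-valued `ψ` has tangent columns of `∇ψ`, so `P_s` acts trivially on every competitor for
`Q_T f`. Conversely, composing a competitor `ψ` for `QF` with the pointwise projection onto `T_s(S²)`
keeps it Lipschitz and zero outside `Q`, and its gradient is `P_s ∇ψ` wherever `ψ` is
differentiable, i.e. almost everywhere by Rademacher's theorem. The two sets of values coincide.
-/

section TangentProj

variable {F : Type*} [NormedAddCommGroup F] [InnerProductSpace ℝ F]

def tangentProj (s : F) : F →L[ℝ] F :=
  ContinuousLinearMap.id ℝ F - (innerSL ℝ s).smulRight s

lemma tangentProj_apply (s v : F) : tangentProj s v = v - (inner ℝ s v : ℝ) • s := rfl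

lemma inner_tangentProj {s : F} (hs : ‖s‖ = 1) (v : F) :
    (inner ℝ s (tangentProj s v) : ℝ) = 0 := by
  have hss : (inner ℝ s s : ℝ) = 1 := by rw [real_inner_self_eq_norm_mul_norm, hs, mul_one]
  rw [tangentProj_apply, inner_sub_right, inner_smul_right, hss, mul_one, sub_self]

end TangentProj

lemma inner_eq_sum_mul {ι : Type*} [Fintype ι] (s v : EuclideanSpace ℝ ι) : (inner ℝ s v : ℝ) = ∑ i, s i * v i := by
  simp [PiLp.inner_apply, mul_comm]

lemma Pproj_add (s : E3) (η ζ : E32) : Pproj s (η + ζ) = Pproj s η + Pproj s ζ := by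
  ext p
  simp only [Pproj, PiLp.add_apply, PiLp.toLp_apply, mul_add, Finset.sum_add_distrib]
  ring

lemma Pproj_eq_self {s : E3} {ζ : E32} (h : ∀ j, ∑ i : Fin 3, s i * ζ (i, j) = 0) :
    Pproj s ζ = ζ := by
  ext p
  simp [Pproj, h p.2]

lemma inner_fderiv_eq_zero {E F : Type*} [NormedAddCommGroup E] [NormedSpace ℝ E]
    [NormedAddCommGroup F] [InnerProductSpace ℝ F] {s : F} {ψ : E → F}
    (hψ : ∀ y, (inner ℝ s (ψ y) : ℝ) = 0) (y v : E) :
    (inner ℝ s (fderiv ℝ ψ y v) : ℝ) = 0 := by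
  by_cases hy : DifferentiableAt ℝ ψ y
  · have hderiv : HasFDerivAt (fun x => innerSL ℝ s (ψ x)) ((innerSL ℝ s).comp (fderiv ℝ ψ y)) y :=
      (innerSL ℝ s).hasFDerivAt.comp y hy.hasFDerivAt
    have hzero : (fun x => innerSL ℝ s (ψ x)) = fun _ => (0 : ℝ) := funext hψ
    rw [hzero] at hderiv
    simpa using DFunLike.congr_fun (hderiv.unique (hasFDerivAt_const 0 y)) v
  · simp [fderiv_zero_of_not_differentiableAt hy]

lemma Pproj_gradm_of_inner_eq_zero {s : E3} {ψ : E2 → E3}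
    (hψ : ∀ y, (inner ℝ s (ψ y) : ℝ) = 0) (y : E2) : Pproj s (gradm ψ y) = gradm ψ y :=
  Pproj_eq_self fun j => by
    simpa [gradm, inner_eq_sum_mul] using inner_fderiv_eq_zero hψ y (EuclideanSpace.single j 1)

lemma gradm_tangentProj_comp (s : E3) {ψ : E2 → E3} {y : E2} (hy : DifferentiableAt ℝ ψ y) :
    gradm (fun x => tangentProj s (ψ x)) y = Pproj s (gradm ψ y) := by
  have hderiv : fderiv ℝ (fun x => tangentProj s (ψ x)) y = (tangentProj s).comp (fderiv ℝ ψ y) :=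
    ((tangentProj s).hasFDerivAt.comp y hy.hasFDerivAt).fderiv
  ext p
  simp only [gradm, hderiv]
  simp only [Pproj, ContinuousLinearMap.comp_apply, PiLp.toLp_apply, tangentProj_apply,
    PiLp.sub_apply, PiLp.smul_apply, smul_eq_mul, inner_eq_sum_mul]
  ring

theorem stmt11_general (g : ℝ → ℝ) (r : ℝ) (s : E3) (hs : ‖s‖ = 1)
    (ξ : E2) (η : E32)
    (hη : ∀ j : Fin 2, ∑ i : Fin 3, s i * η (i, j) = 0) :
    QTf g r s ξ η = Qfproj g r s ξ η := by
  unfold QTf Qfproj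
  congr 1
  ext v
  constructor
  · rintro ⟨φ, ψ, hφ, hψ, hφ0, hψ0, hψ_tangent, rfl⟩
    refine ⟨φ, ψ, hφ, hψ, hφ0, hψ0, ?_⟩
    simp_rw [Pproj_add, Pproj_eq_self hη, Pproj_gradm_of_inner_eq_zero hψ_tangent]
  · rintro ⟨φ, ψ, hφ, ⟨K, hK⟩, hφ0, hψ0, rfl⟩
    refine ⟨φ, fun x => tangentProj s (ψ x), hφ, ⟨_, (tangentProj s).lipschitz.comp hK⟩, hφ0,
      fun y hy => by simp [hψ0 y hy], fun y => inner_tangentProj hs (ψ y), integral_congr_ae ?_⟩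
    filter_upwards [ae_restrict_of_ae hK.ae_differentiableAt] with y hy
    rw [gradm_tangentProj_comp s hy, Pproj_add, Pproj_eq_self hη]

theorem stmt11 (α β : ℝ) (hα : 0 < α) (hαβ : α ≤ β) (g : ℝ → ℝ)
    (hg_pos : ∀ t : ℝ, 0 ≤ t → 0 < g t ∧ g t ≤ 1)
    (hg_mono : ∀ t₁ t₂ : ℝ, 0 ≤ t₁ → t₁ ≤ t₂ → g t₂ ≤ g t₁)
    (hg_lip : ∃ K : NNReal, LipschitzOnWith K g (Set.Ici 0))
    (hg0 : g 0 = 1)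
    (hg_lim : Filter.Tendsto g Filter.atTop (nhds 0))
    (r : ℝ) (hr : r ∈ Set.Icc α β) (s : E3) (hs : ‖s‖ = 1)
    (ξ : E2) (η : E32)
    (hη : ∀ j : Fin 2, ∑ i : Fin 3, s i * η (i, j) = 0) :
    QTf g r s ξ η = Qfproj g r s ξ η :=
  stmt11_general g r s hs ξ η hη
end
end
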